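/- arXiv:2303.09965 — 7 statements merged into one kernel-verified Lean document; each statement's English description precedes it below -/
import Mathlib

section
/- Let p ∈ (1, n], α ∈ ℝ with α + 1 < p, and c = ((p−α−1)/p)^{p−1}. Define f(t) = t·log(1/t) for t ∈ (0,1), G(t) = c·f(t)^{1−p}, w(t) = log^α(1/t), L(t) = (p−1)/t. Then for all t ∈ (0,1): G'(t) + (w'(t)/w(t) + L(t))·G(t) − (p−1)·G(t)^{p/(p−1)} = ((p−α−1)/p)^p · f(t)^{−p}. -/
theorem stmt_6 (p α n : ℝ) (hn : 2 ≤ n) (hp : 1 < p) (hpn : p ≤ n) (hα : α + 1 < p)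
    (c : ℝ) (hc : c = ((p - α - 1) / p) ^ (p - 1))
    (f G w L : ℝ → ℝ)
    (hf : ∀ t, f t = t * Real.log (1 / t))
    (hG : ∀ t, G t = c * f t ^ (1 - p))
    (hw : ∀ t, w t = Real.log (1 / t) ^ α)
    (hL : ∀ t, L t = (p - 1) / t) :
    ∀ t ∈ Set.Ioo (0 : ℝ) 1,
      deriv G t + (deriv w t / w t + L t) * G t - (p - 1) * G t ^ (p / (p - 1)) =
        ((p - α - 1) / p) ^ p * f t ^ (-p) := by
  rintro t ⟨ht0, ht1⟩
  have hp0 : (0:ℝ) < p := by linarith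
  have hp1 : (0:ℝ) < p - 1 := by linarith
  have hs0 : 0 < Real.log (1 / t) := by
    rw [one_div, Real.log_inv]
    have := Real.log_neg ht0 ht1
    linarith
  set s : ℝ := Real.log (1 / t) with hsdef
  have hseq : -Real.log t = s := by rw [hsdef, one_div, Real.log_inv]
  have hA : (0:ℝ) < t * s := mul_pos ht0 hs0
  have hb : (0:ℝ) < (p - α - 1) / p := div_pos (by linarith) hp0
  set b : ℝ := (p - α - 1) / p with hbdef
  have hcpos : 0 < c := by rw [hc]; exact Real.rpow_pos_of_pos hb _
  -- derivative of inner function x ↦ x * log (1/x)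
  have hFe : (fun x : ℝ => x * Real.log (1 / x)) = fun x => x * -Real.log x := by
    funext x; rw [one_div, Real.log_inv]
  have hF : HasDerivAt (fun x : ℝ => x * Real.log (1 / x)) (s - 1) t := by
    rw [hFe]
    have h := (hasDerivAt_id t).fun_mul (Real.hasDerivAt_log ht0.ne').fun_neg
    refine h.congr_deriv ?_
    show 1 * -Real.log t + t * -t⁻¹ = s - 1; rw [mul_neg t, mul_inv_cancel₀ ht0.ne']
    linarith [hseq]
  -- derivative of G
  have hGfun : G = fun x => c * (x * Real.log (1 / x)) ^ (1 - p) := by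
    funext x; rw [hG, hf]
  have hGd : HasDerivAt G (c * ((s - 1) * (1 - p) * (t * s) ^ (1 - p - 1))) t := by
    rw [hGfun]
    exact ((hF.rpow_const (Or.inl hA.ne')).const_mul c)
  -- derivative of w
  have hwfun : w = fun x => (-Real.log x) ^ α := by
    funext x; rw [hw, one_div, Real.log_inv]
  have hwd : HasDerivAt w (-t⁻¹ * α * s ^ (α - 1)) t := by
    rw [hwfun]
    have h := ((Real.hasDerivAt_log ht0.ne').neg).rpow_const (x := t) (p := α)
      (Or.inl (by rw [Pi.neg_apply, hseq]; exact hs0.ne'))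
    simpa [hseq] using h
  rw [hGd.deriv, hwd.deriv, hG, hw, hf, hL, ← hsdef]
  -- rewrite rpow expressions
  have e1 : (t * s) ^ (1 - p - 1) = (t * s) ^ (-p) := by norm_num
  have e2 : (t * s) ^ (1 - p) = (t * s) * (t * s) ^ (-p) := by
    rw [show (1:ℝ) - p = 1 + -p by ring, Real.rpow_add hA, Real.rpow_one]
  have e3 : s ^ (α - 1) = s ^ α / s := by
    rw [Real.rpow_sub hs0, Real.rpow_one]
  have e4 : (c * (t * s) ^ (1 - p)) ^ (p / (p - 1)) = b ^ p * (t * s) ^ (-p) := by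
    rw [Real.mul_rpow hcpos.le (Real.rpow_pos_of_pos hA _).le, hc,
      ← Real.rpow_mul hb.le, ← Real.rpow_mul hA.le]
    congr 2
    · field_simp
    · field_simp; ring
  have key : c * (p - α - 1) = p * b ^ p := by
    have hb1 : b ^ p = b ^ (p - 1) * b := by
      nth_rewrite 1 [show p = (p - 1) + 1 by ring]
      exact Real.rpow_add_one hb.ne' _
    rw [hc, hb1, hbdef]
    field_simp
  rw [e1, e4, e2, e3]
  have hSa : (0:ℝ) < s ^ α := Real.rpow_pos_of_pos hs0 _
  clear_value s b
  field_simp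
  linear_combination key
end

section
/- Let p ∈ (1, 2] and define h(z) = (1+z)^{p−2}·(1 + (2−p)z + z²) − 1 for z ∈ (−1, 0). Then h is decreasing on (−1, 0) and h(z) > 0 for all z ∈ (−1, 0); consequently lim_{z→0⁻} h(z) = 0. -/
theorem stmt_7 (p : ℝ) (hp : 1 < p) (hp2 : p ≤ 2)
    (h : ℝ → ℝ)
    (hh : ∀ z, h z = (1 + z) ^ (p - 2) * (1 + (2 - p) * z + z ^ 2) - 1) :
    StrictAntiOn h (Set.Ioo (-1 : ℝ) 0) ∧
    (∀ z ∈ Set.Ioo (-1 : ℝ) 0, 0 < h z) ∧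
    Filter.Tendsto h (nhdsWithin 0 (Set.Iio 0)) (nhds 0) := by
  have hfun : h = fun z => (1 + z) ^ (p - 2) * (1 + (2 - p) * z + z ^ 2) - 1 :=
    funext hh
  have h0 : h 0 = 0 := by
    rw [hh]; simp
  -- continuity on Ioc (-1) 0
  have hcont : ContinuousOn h (Set.Ioc (-1 : ℝ) 0) := by
    rw [hfun]
    apply ContinuousOn.sub _ continuousOn_const
    apply ContinuousOn.mul
    · apply ContinuousOn.rpow_const
      · exact (continuous_const.add continuous_id).continuousOn
      · intro x hx
        left
        have : (0:ℝ) < 1 + x := by linarith [hx.1]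
        linarith
    · fun_prop
  -- derivative negative on Ioo
  have hderiv : ∀ z ∈ Set.Ioo (-1 : ℝ) 0,
      HasDerivAt h (p * z * (z + 3 - p) * (1 + z) ^ (p - 3)) z := by
    intro z hz
    have hz1 : (0:ℝ) < 1 + z := by linarith [hz.1]
    have hd1 : HasDerivAt (fun z : ℝ => (1 + z) ^ (p - 2))
        ((p - 2) * (1 + z) ^ (p - 2 - 1) * 1) z := by
      have hf : HasDerivAt (fun z : ℝ => 1 + z) 1 z := by
        simpa [Pi.add_def] using (hasDerivAt_const z (1:ℝ)).add (hasDerivAt_id z)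
      simpa [mul_comm] using hf.rpow_const (Or.inl (ne_of_gt hz1))
    have hd2 : HasDerivAt (fun z : ℝ => 1 + (2 - p) * z + z ^ 2)
        ((2 - p) + 2 * z) z := by
      have := ((hasDerivAt_const z (1:ℝ)).add
        ((hasDerivAt_id z).const_mul (2 - p))).add
        (hasDerivAt_pow 2 z)
      simpa [Pi.add_def] using this
    have hd : HasDerivAt h
        ((p - 2) * (1 + z) ^ (p - 2 - 1) * 1 * (1 + (2 - p) * z + z ^ 2)
          + (1 + z) ^ (p - 2) * ((2 - p) + 2 * z)) z := by
      rw [hfun]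
      exact (hd1.mul hd2).sub_const 1
    convert hd using 1
    have e1 : p - 2 - 1 = p - 3 := by ring
    have e2 : (1 + z) ^ (p - 2) = (1 + z) ^ (p - 3) * (1 + z) := by
      rw [show p - 2 = (p - 3) + 1 by ring, Real.rpow_add hz1, Real.rpow_one]
    rw [e1, e2]
    ring
  have hanti : StrictAntiOn h (Set.Ioc (-1 : ℝ) 0) := by
    apply strictAntiOn_of_deriv_neg (convex_Ioc _ _) hcont
    intro z hz
    rw [interior_Ioc] at hz
    rw [(hderiv z hz).deriv]
    have hz1 : (0:ℝ) < 1 + z := by linarith [hz.1]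
    have hA : (0:ℝ) < (1 + z) ^ (p - 3) := Real.rpow_pos_of_pos hz1 _
    have h1 : p * z * (z + 3 - p) < 0 := by
      have : (0:ℝ) < z + 3 - p := by linarith [hz.1, hz.2]
      exact mul_neg_of_neg_of_pos (mul_neg_of_pos_of_neg (by linarith) hz.2) this
    exact mul_neg_of_neg_of_pos h1 hA
  refine ⟨hanti.mono Set.Ioo_subset_Ioc_self, ?_, ?_⟩
  · intro z hz
    have := hanti ⟨hz.1, le_of_lt hz.2⟩ ⟨by norm_num, le_refl 0⟩ hz.2
    rw [h0] at this
    exact this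
  · have : ContinuousAt h 0 := by
      rw [hfun]
      apply ContinuousAt.sub _ continuousAt_const
      apply ContinuousAt.mul
      · apply ContinuousAt.rpow_const
        · fun_prop
        · left; norm_num
      · fun_prop
    have := this.continuousWithinAt (s := Set.Iio (0:ℝ))
    rw [ContinuousWithinAt, h0] at this
    exact this
end

section
/- Let R > 0, p > 1, n ≥ 2, and let w, W : (0,R) → (0,∞) with w of class C¹. A positive C² function y on (0,R) solves (t^{n−1} w(t) |y'(t)|^{p−2} y'(t))' + t^{n−1} w(t) W(t) |y(t)|^{p−2} y(t) = 0 on (0,R) if and only if G(t) = −|y'(t)|^{p−2} y'(t) / y(t)^{p−1} solves G'(t) + (w'(t)/w(t) + (n−1)/t)·G(t) − (p−1)·|G(t)|^{p/(p−1)} = W(t) on (0,R). -/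
private lemma riccati_alg (q t T wv w' Wv yv v B D Φ c : ℝ)
    (ht : t ≠ 0) (hT : T ≠ 0) (hw : wv ≠ 0) (hy : yv ≠ 0) (hB : B ≠ 0) :
    ((c * T) * wv + (T * t) * w') * Φ + (T * t) * wv * D + (T * t) * wv * Wv * (B * yv) = 0 ↔
    ((-D) * (B * yv) - (-Φ) * (v * q * B)) / (B * yv) ^ 2 + (w' / wv + c / t) * (-Φ / (B * yv))
      - q * (Φ * v / (B * yv * yv)) = Wv := by
  have hden : t * wv * (B * yv) ≠ 0 := mul_ne_zero (mul_ne_zero ht hw) (mul_ne_zero hB hy)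
  have key : ((-D) * (B * yv) - (-Φ) * (v * q * B)) / (B * yv) ^ 2 + (w' / wv + c / t) * (-Φ / (B * yv))
      - q * (Φ * v / (B * yv * yv)) - Wv
      = -(t * wv * D + (t * w' + c * wv) * Φ + t * wv * Wv * (B * yv)) / (t * wv * (B * yv)) := by
    field_simp
    ring
  have hLT : ((c * T) * wv + (T * t) * w') * Φ + (T * t) * wv * D + (T * t) * wv * Wv * (B * yv)
      = T * (t * wv * D + (t * w' + c * wv) * Φ + t * wv * Wv * (B * yv)) := by ring
  rw [hLT, ← sub_eq_zero (a := _ - q * (Φ * v / (B * yv * yv))), key, mul_eq_zero,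
    div_eq_zero_iff, neg_eq_zero, or_iff_left hden, or_iff_right hT]

theorem stmt_8 (R p : ℝ) (n : ℕ) (hR : 0 < R) (hp : 1 < p) (hn : 2 ≤ n)
    (w W y : ℝ → ℝ)
    (hw : ∀ t ∈ Set.Ioo 0 R, 0 < w t) (hw1 : ContDiffOn ℝ 1 w (Set.Ioo 0 R))
    (hW : ∀ t ∈ Set.Ioo 0 R, 0 < W t)
    (hy : ∀ t ∈ Set.Ioo 0 R, 0 < y t) (hy2 : ContDiffOn ℝ 2 y (Set.Ioo 0 R))
    (G : ℝ → ℝ)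
    (hG : ∀ t, G t = -(|deriv y t| ^ (p - 2) * deriv y t) / y t ^ (p - 1)) :
    (∀ t ∈ Set.Ioo 0 R,
        deriv (fun s => s ^ (n - 1) * w s * |deriv y s| ^ (p - 2) * deriv y s) t +
          t ^ (n - 1) * w t * W t * |y t| ^ (p - 2) * y t = 0) ↔
    (∀ t ∈ Set.Ioo 0 R,
        deriv G t + (deriv w t / w t + (n - 1) / t) * G t -
          (p - 1) * |G t| ^ (p / (p - 1)) = W t) := by
  obtain ⟨m, rfl⟩ : ∃ m, n = m + 2 := ⟨n - 2, by omega⟩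
  have hm1 : m + 2 - 1 = m + 1 := rfl
  refine forall₂_congr fun t ht => ?_
  obtain ⟨ht0, htR⟩ := ht
  have ht' : t ∈ Set.Ioo (0:ℝ) R := ⟨ht0, htR⟩
  have hwt := hw t ht'
  have hyt := hy t ht'
  have hWt := hW t ht'
  have hmem : Set.Ioo (0:ℝ) R ∈ nhds t := isOpen_Ioo.mem_nhds ht'
  have hwd : DifferentiableAt ℝ w t := (hw1.contDiffAt hmem).differentiableAt (by norm_num)
  have hyd : DifferentiableAt ℝ y t := (hy2.contDiffAt hmem).differentiableAt (by norm_num)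
  have hy'd : DifferentiableAt ℝ (deriv y) t :=
    (((hy2.deriv_of_isOpen (m := 1) isOpen_Ioo (by norm_num)).contDiffAt hmem).differentiableAt (by norm_num))
  have hAne : y t ^ (p - 1) ≠ 0 := (Real.rpow_pos_of_pos hyt _).ne'
  have hBne : y t ^ (p - 2) ≠ 0 := (Real.rpow_pos_of_pos hyt _).ne'
  have hPne : y t ^ p ≠ 0 := (Real.rpow_pos_of_pos hyt _).ne'
  have hGfun : G = fun s => -(|deriv y s| ^ (p - 2) * deriv y s) / y s ^ (p - 1) := funext hG
  have hBA : y t ^ (p - 2) * y t = y t ^ (p - 1) := by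
    have := Real.rpow_add_one hyt.ne' (p - 2)
    rw [show p - 2 + 1 = p - 1 by ring] at this
    exact this.symm
  have hAP : y t ^ (p - 1) * y t = y t ^ p := by
    have := Real.rpow_add_one hyt.ne' (p - 1)
    rw [show p - 1 + 1 = p by ring] at this
    exact this.symm
  by_cases hd : DifferentiableAt ℝ (fun s => |deriv y s| ^ (p - 2) * deriv y s) t
  · -- differentiable case
    set D := deriv (fun s => |deriv y s| ^ (p - 2) * deriv y s) t with hDdef
    have hDer : HasDerivAt (fun s => |deriv y s| ^ (p - 2) * deriv y s) D t := hd.hasDerivAt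
    have ha : HasDerivAt (fun s => s ^ (m + 1) * w s)
        ((↑(m + 1) * t ^ m) * w t + t ^ (m + 1) * deriv w t) t :=
      (hasDerivAt_pow (m + 1) t).mul hwd.hasDerivAt
    have hF : HasDerivAt (fun s => s ^ (m + 1) * w s * (|deriv y s| ^ (p - 2) * deriv y s))
        (((↑(m + 1) * t ^ m) * w t + t ^ (m + 1) * deriv w t) * (|deriv y t| ^ (p - 2) * deriv y t)
          + (t ^ (m + 1) * w t) * D) t := ha.mul hDer
    have hFeq : (fun s => s ^ (m + 2 - 1) * w s * |deriv y s| ^ (p - 2) * deriv y s)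
        = (fun s => s ^ (m + 1) * w s * (|deriv y s| ^ (p - 2) * deriv y s)) := by
      funext s; rw [hm1]; ring
    have hderivF : deriv (fun s => s ^ (m + 2 - 1) * w s * |deriv y s| ^ (p - 2) * deriv y s) t
        = ((↑(m + 1) * t ^ m) * w t + t ^ (m + 1) * deriv w t) * (|deriv y t| ^ (p - 2) * deriv y t)
          + (t ^ (m + 1) * w t) * D := by
      rw [hFeq]; exact hF.deriv
    have hA : HasDerivAt (fun s => y s ^ (p - 1))
        (deriv y t * (p - 1) * y t ^ (p - 2)) t := by
      have := hyd.hasDerivAt.rpow_const (p := p - 1) (Or.inl hyt.ne')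
      rwa [show p - 1 - 1 = p - 2 by ring] at this
    have hGder : HasDerivAt G
        (((-D) * (y t ^ (p - 1)) - (-(|deriv y t| ^ (p - 2) * deriv y t)) *
          (deriv y t * (p - 1) * y t ^ (p - 2))) / (y t ^ (p - 1)) ^ 2) t := by
      rw [hGfun]
      exact hDer.neg.div hA hAne
    have habs : |G t| ^ (p / (p - 1))
        = (|deriv y t| ^ (p - 2) * deriv y t) * deriv y t / y t ^ p := by
      have hκ : p / (p - 1) ≠ 0 := (div_pos (by linarith) (by linarith)).ne'
      rcases eq_or_ne (deriv y t) 0 with hv | hv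
      · rw [hG t, hv]
        simp [Real.zero_rpow hκ]
      · have hav : (0:ℝ) < |deriv y t| := abs_pos.mpr hv
        have h1 : |G t| = |deriv y t| ^ (p - 1) / y t ^ (p - 1) := by
          rw [hG t, abs_div, abs_neg, abs_mul,
            abs_of_nonneg (Real.rpow_nonneg (abs_nonneg _) _),
            abs_of_pos (Real.rpow_pos_of_pos hyt _)]
          congr 1
          have h2 := Real.rpow_add_one hav.ne' (p - 2)
          rw [show p - 2 + 1 = p - 1 by ring] at h2
          exact h2.symm
        have h3 : (p - 1) * (p / (p - 1)) = p := by
          rw [mul_comm]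
          exact div_mul_cancel₀ p (sub_ne_zero_of_ne hp.ne')
        have h4 : |deriv y t| ^ (p - 2) * deriv y t * deriv y t = |deriv y t| ^ p := by
          have h5 : deriv y t * deriv y t = |deriv y t| ^ (2:ℝ) := by
            rw [show (2:ℝ) = ((2:ℕ):ℝ) by norm_num, Real.rpow_natCast, sq_abs, sq]
          rw [mul_assoc, h5, ← Real.rpow_add hav]
          norm_num
        rw [h1, Real.div_rpow (Real.rpow_nonneg (abs_nonneg _) _)
            (Real.rpow_nonneg hyt.le _), ← Real.rpow_mul (abs_nonneg _),
          ← Real.rpow_mul hyt.le, h3, h4]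
    rw [hderivF, hGder.deriv, habs, hG t, abs_of_pos hyt, ← hAP]
    simp only [hm1]
    rw [mul_assoc (t ^ (m + 1) * w t * W t), hBA]
    push_cast
    have := riccati_alg (p - 1) t (t ^ m) (w t) (deriv w t) (W t) (y t) (deriv y t)
      (y t ^ (p - 2)) D (|deriv y t| ^ (p - 2) * deriv y t) (↑m + 1)
      ht0.ne' (pow_ne_zero m ht0.ne') hwt.ne' hyt.ne' hBne
    rw [hBA] at this
    convert this using 2 <;> ring
  · -- non-differentiable case: both sides false
    have hκ : p / (p - 1) ≠ 0 := (div_pos (by linarith) (by linarith)).ne'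
    have hveq : deriv y t = 0 := by
      by_contra hv
      exact hd ((((differentiableAt_abs hv).comp t hy'd).rpow_const
        (Or.inl (abs_ne_zero.mpr hv))).mul hy'd)
    have hΦ0 : |deriv y t| ^ (p - 2) * deriv y t = 0 := by rw [hveq, mul_zero]
    have hG0 : G t = 0 := by rw [hG t, hΦ0, neg_zero, zero_div]
    have hFnd : ¬ DifferentiableAt ℝ
        (fun s => s ^ (m + 2 - 1) * w s * |deriv y s| ^ (p - 2) * deriv y s) t := by
      intro hF
      apply hd
      have hFeq : (fun s => s ^ (m + 2 - 1) * w s * |deriv y s| ^ (p - 2) * deriv y s)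
          = fun s => (s ^ (m + 1) * w s) * (|deriv y s| ^ (p - 2) * deriv y s) := by
        funext s; rw [hm1]; ring
      rw [hFeq] at hF
      have ha : DifferentiableAt ℝ (fun s => s ^ (m + 1) * w s) t :=
        (differentiableAt_pow _).mul hwd
      have hat : t ^ (m + 1) * w t ≠ 0 := mul_ne_zero (pow_ne_zero _ ht0.ne') hwt.ne'
      have hev : ∀ᶠ s in nhds t, s ^ (m + 1) * w s ≠ 0 := ha.continuousAt.eventually_ne hat
      have heq : (fun s => |deriv y s| ^ (p - 2) * deriv y s) =ᶠ[nhds t]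
          fun s => (s ^ (m + 1) * w s * (|deriv y s| ^ (p - 2) * deriv y s))
            / (s ^ (m + 1) * w s) := by
        filter_upwards [hev] with s hs
        rw [mul_div_cancel_left₀ _ hs]
      exact (hF.div ha hat).congr_of_eventuallyEq heq
    have hGnd : ¬ DifferentiableAt ℝ G t := by
      intro hGd
      apply hd
      have hyA : DifferentiableAt ℝ (fun s => y s ^ (p - 1)) t :=
        hyd.rpow_const (Or.inl hyt.ne')
      have hev : ∀ᶠ s in nhds t, 0 < y s :=
        hyd.continuousAt.eventually (eventually_gt_nhds hyt)
      have heq : (fun s => |deriv y s| ^ (p - 2) * deriv y s) =ᶠ[nhds t]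
          fun s => -(G s * y s ^ (p - 1)) := by
        filter_upwards [hev] with s hs
        rw [hG s, div_mul_cancel₀ _ (Real.rpow_pos_of_pos hs (p - 1)).ne', neg_neg]
      exact ((hGd.mul hyA).neg).congr_of_eventuallyEq heq
    apply iff_of_false
    · rw [deriv_zero_of_not_differentiableAt hFnd, zero_add]
      refine ne_of_gt ?_
      rw [abs_of_pos hyt]
      have : (0:ℝ) < y t ^ (p - 2) := Real.rpow_pos_of_pos hyt _
      positivity
    · intro hcon
      simp only [deriv_zero_of_not_differentiableAt hGnd, hG0, mul_zero, abs_zero,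
        Real.zero_rpow hκ, zero_add, zero_sub, neg_zero] at hcon
      exact hWt.ne' hcon.symm
end

section
/- Let n ≥ 3, κ < 0, λ ∈ [n−2, (n−1)²/4], γ = √((n−1)² − 4λ), h = (γ+1)/2. Define L(t) = (n−1)·√(−κ)·coth(√(−κ)t), G(t) = −h/t + ((n−2)/2 + h)·√(−κ)·coth(√(−κ)t), and W(t) = λ|κ| + h²/t² + |κ|·((n−2)²/4 − h²)/sinh²(√(−κ)t) + h·γ·(√(−κ)·t·coth(√(−κ)t) − 1)/t². Then for all t > 0: G'(t) + L(t)·G(t) − G(t)² = W(t), and moreover G(t) > 0 for all t > 0. -/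
lemma sinh_lt_mul_cosh {x : ℝ} (hx : 0 < x) : Real.sinh x < x * Real.cosh x := by
  have H : StrictMonoOn (fun y : ℝ => y * Real.cosh y - Real.sinh y) (Set.Ici 0) := by
    apply strictMonoOn_of_deriv_pos (convex_Ici 0)
    · fun_prop
    · intro y hy
      rw [interior_Ici] at hy
      have h2 : HasDerivAt (fun y : ℝ => y * Real.cosh y - Real.sinh y)
          (1 * Real.cosh y + y * Real.sinh y - Real.cosh y) y :=
        ((hasDerivAt_id y).mul (Real.hasDerivAt_cosh y)).sub (Real.hasDerivAt_sinh y)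
      rw [h2.deriv]
      have hy0 : 0 < y := hy
      have := Real.sinh_pos_iff.mpr hy0
      nlinarith [mul_pos hy0 this]
  have := H (Set.self_mem_Ici) (Set.mem_Ici.mpr hx.le) hx
  simpa using this

lemma key_identity (n γ a t S C h lam : ℝ) (hS : S ≠ 0) (ht : t ≠ 0)
    (hcs : C ^ 2 - S ^ 2 = 1) (hh : h = (γ + 1) / 2)
    (hlam : lam = ((n - 1) ^ 2 - γ ^ 2) / 4) :
    (h / t ^ 2 - ((n - 2) / 2 + h) * a ^ 2 / S ^ 2) +
      (n - 1) * a * (C / S) * (-h / t + ((n - 2) / 2 + h) * a * (C / S)) -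
      (-h / t + ((n - 2) / 2 + h) * a * (C / S)) ^ 2
    = lam * a ^ 2 + h ^ 2 / t ^ 2 + a ^ 2 * ((n - 2) ^ 2 / 4 - h ^ 2) / S ^ 2 +
      h * γ * (a * t * (C / S) - 1) / t ^ 2 := by
  subst hh hlam
  field_simp
  linear_combination (4 * t ^ 2 * a ^ 2 * ((n - 1) ^ 2 - γ ^ 2)) * hcs

theorem stmt_11 (n : ℕ) (hn : 3 ≤ n) (κ lam : ℝ) (hκ : κ < 0)
    (hlam : lam ∈ Set.Icc ((n : ℝ) - 2) (((n : ℝ) - 1) ^ 2 / 4))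
    (γ h : ℝ) (hγ : γ = Real.sqrt (((n : ℝ) - 1) ^ 2 - 4 * lam)) (hh : h = (γ + 1) / 2)
    (L G W : ℝ → ℝ)
    (hL : ∀ t, L t = ((n : ℝ) - 1) * Real.sqrt (-κ) *
        (Real.cosh (Real.sqrt (-κ) * t) / Real.sinh (Real.sqrt (-κ) * t)))
    (hG : ∀ t, G t = -h / t + (((n : ℝ) - 2) / 2 + h) * Real.sqrt (-κ) *
        (Real.cosh (Real.sqrt (-κ) * t) / Real.sinh (Real.sqrt (-κ) * t)))
    (hW : ∀ t, W t = lam * |κ| + h ^ 2 / t ^ 2 +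
        |κ| * ((((n : ℝ) - 2) ^ 2 / 4 - h ^ 2)) / Real.sinh (Real.sqrt (-κ) * t) ^ 2 +
        h * γ * (Real.sqrt (-κ) * t *
          (Real.cosh (Real.sqrt (-κ) * t) / Real.sinh (Real.sqrt (-κ) * t)) - 1) / t ^ 2) :
    ∀ t : ℝ, 0 < t →
      (deriv G t + L t * G t - G t ^ 2 = W t) ∧ 0 < G t := by
  intro t ht
  set a := Real.sqrt (-κ) with ha
  have hκ' : (0:ℝ) < -κ := by linarith
  have ha0 : 0 < a := Real.sqrt_pos.mpr hκ'
  have ha2 : a ^ 2 = -κ := Real.sq_sqrt hκ'.le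
  have hat : 0 < a * t := mul_pos ha0 ht
  have hs : 0 < Real.sinh (a * t) := Real.sinh_pos_iff.mpr hat
  have hsne : Real.sinh (a * t) ≠ 0 := hs.ne'
  have hγ0 : 0 ≤ γ := hγ ▸ Real.sqrt_nonneg _
  have hγ2 : γ ^ 2 = ((n : ℝ) - 1) ^ 2 - 4 * lam := by
    rw [hγ]
    exact Real.sq_sqrt (by nlinarith [hlam.2])
  have hn3 : (3:ℝ) ≤ (n:ℝ) := by exact_mod_cast hn
  have hh0 : 0 < h := by rw [hh]; linarith
  have hcs : Real.cosh (a*t) ^ 2 - Real.sinh (a*t) ^ 2 = 1 := Real.cosh_sq_sub_sinh_sq _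
  have habs : |κ| = -κ := abs_of_neg hκ
  have hGfun : G = fun s => -h / s + (((n : ℝ) - 2) / 2 + h) * a *
      (Real.cosh (a * s) / Real.sinh (a * s)) := funext hG
  -- derivative of G at t
  have hd : HasDerivAt G
      (h / t ^ 2 - (((n : ℝ) - 2) / 2 + h) * a ^ 2 / Real.sinh (a*t) ^ 2) t := by
    rw [hGfun]
    have hlin : HasDerivAt (fun s : ℝ => a * s) a t := by
      simpa using (hasDerivAt_id t).const_mul a
    have hsinh : HasDerivAt (fun s : ℝ => Real.sinh (a * s)) (Real.cosh (a*t) * a) t :=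
      (Real.hasDerivAt_sinh (a*t)).comp t hlin
    have hcosh' : HasDerivAt (fun s : ℝ => Real.cosh (a * s)) (Real.sinh (a*t) * a) t :=
      (Real.hasDerivAt_cosh (a*t)).comp t hlin
    have hq : HasDerivAt (fun s : ℝ => Real.cosh (a * s) / Real.sinh (a * s))
        ((Real.sinh (a*t) * a * Real.sinh (a*t) - Real.cosh (a*t) * (Real.cosh (a*t) * a)) /
          Real.sinh (a*t) ^ 2) t := hcosh'.div hsinh hsne
    have hinv : HasDerivAt (fun s : ℝ => -h / s) (h / t ^ 2) t := by
      have H := (hasDerivAt_inv ht.ne').const_mul (-h)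
      have e1 : (fun s : ℝ => -h / s) = fun s : ℝ => -h * s⁻¹ := by
        funext s; rw [div_eq_mul_inv]
      rw [e1]
      exact H.congr_deriv (by ring)
    have hnum : Real.sinh (a*t) * a * Real.sinh (a*t) -
        Real.cosh (a*t) * (Real.cosh (a*t) * a) = -a := by
      linear_combination (-a) * hcs
    have H2 := hinv.add (hq.const_mul ((((n : ℝ) - 2) / 2 + h) * a))
    rw [hnum] at H2
    exact H2.congr_deriv (by ring)
  refine ⟨?_, ?_⟩
  · rw [hd.deriv, hL t, hG t, hW t, habs, ← ha2]
    exact key_identity (n : ℝ) γ a t _ _ h lam hsne ht.ne' hcs hh (by linarith)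
  · rw [hG t]
    have key : Real.sinh (a*t) < (a*t) * Real.cosh (a*t) := sinh_lt_mul_cosh hat
    have h1 : 1 / t < a * (Real.cosh (a*t) / Real.sinh (a*t)) := by
      rw [div_lt_iff₀ ht, show a * (Real.cosh (a*t) / Real.sinh (a*t)) * t =
        (a * t * Real.cosh (a*t)) / Real.sinh (a*t) by ring, lt_div_iff₀ hs, one_mul]
      exact key
    have hc0 : 0 < ((n : ℝ) - 2) / 2 + h := by linarith
    have h2 : (((n : ℝ) - 2) / 2 + h) * (1 / t) <
        (((n : ℝ) - 2) / 2 + h) * (a * (Real.cosh (a*t) / Real.sinh (a*t))) :=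
      mul_lt_mul_of_pos_left h1 hc0
    have h3 : h * (1/t) ≤ (((n : ℝ) - 2) / 2 + h) * (1 / t) := by
      apply mul_le_mul_of_nonneg_right _ (by positivity)
      linarith
    have e2 : -h / t = -(h * (1/t)) := by ring
    have e3 : (((n : ℝ) - 2) / 2 + h) * a * (Real.cosh (a*t) / Real.sinh (a*t)) =
        (((n : ℝ) - 2) / 2 + h) * (a * (Real.cosh (a*t) / Real.sinh (a*t))) := by ring
    rw [e2, e3]
    linarith
end

section
/- Let n ≥ 2, R > 0, ν ∈ [0, (n−2)/2], C = j_{ν,1}²/R², where j_{ν,1} is the first positive zero of the Bessel function J_ν. Define G(t) = (n−2−2ν)/(2t) + √C · J_{ν+1}(√C t)/J_ν(√C t) for t ∈ (0,R). Then G is well-defined and positive on (0,R), and satisfies G'(t) + ((n−1)/t)·G(t) − G(t)² = ((n−2)²/4 − ν²)/t² + C for all t ∈ (0,R). -/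
/-- The Bessel function of the first kind `J_ν`, defined by its power series. -/
noncomputable def besselJ (ν t : ℝ) : ℝ :=
  ∑' k : ℕ, (-1 : ℝ) ^ k / (Real.Gamma (k + 1) * Real.Gamma (k + ν + 1)) *
    (t / 2) ^ (2 * (k : ℝ) + ν)

/-- The first positive zero `j_{ν,1}` of the Bessel function `J_ν`. -/
noncomputable def besselFirstZero (ν : ℝ) : ℝ :=
  sInf {t : ℝ | 0 < t ∧ besselJ ν t = 0}

open Real Filter Set

namespace BesselAux


noncomputable def bc (μ : ℝ) (k : ℕ) : ℝ :=
  (-1) ^ k / (Real.Gamma (k + 1) * Real.Gamma (k + μ + 1))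

noncomputable def bg (μ x : ℝ) : ℝ := ∑' k : ℕ, bc μ k * x ^ k

lemma gammaA_pos (k : ℕ) : 0 < Real.Gamma ((k : ℝ) + 1) :=
  Real.Gamma_pos_of_pos (by positivity)

lemma gammaB_pos {μ : ℝ} (hμ : 0 ≤ μ) (k : ℕ) : 0 < Real.Gamma ((k : ℝ) + μ + 1) :=
  Real.Gamma_pos_of_pos (by positivity)

lemma bc_up {μ : ℝ} (hμ : 0 ≤ μ) (k : ℕ) : bc (μ + 1) k = bc μ k / ((k : ℝ) + μ + 1) := by
  have h : Real.Gamma (((k : ℝ) + μ + 1) + 1) = ((k : ℝ) + μ + 1) * Real.Gamma ((k : ℝ) + μ + 1) :=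
    Real.Gamma_add_one (by positivity)
  have h2 : (k : ℝ) + (μ + 1) + 1 = ((k : ℝ) + μ + 1) + 1 := by ring
  have hA := gammaA_pos k
  have hB := gammaB_pos hμ k
  have hk : (0:ℝ) < (k : ℝ) + μ + 1 := by positivity
  rw [bc, bc, h2, h]
  field_simp

lemma bc_succ {μ : ℝ} (hμ : 0 ≤ μ) (k : ℕ) :
    bc μ (k + 1) = -bc μ k / (((k : ℝ) + 1) * ((k : ℝ) + μ + 1)) := by
  have hA := gammaA_pos k
  have hB := gammaB_pos hμ k
  have h1 : Real.Gamma (((k : ℝ) + 1) + 1) = ((k : ℝ) + 1) * Real.Gamma ((k : ℝ) + 1) :=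
    Real.Gamma_add_one (by positivity)
  have h2 : Real.Gamma (((k : ℝ) + μ + 1) + 1) = ((k : ℝ) + μ + 1) * Real.Gamma ((k : ℝ) + μ + 1) :=
    Real.Gamma_add_one (by positivity)
  have e1 : ((k + 1 : ℕ) : ℝ) + 1 = ((k : ℝ) + 1) + 1 := by push_cast; ring
  have e2 : ((k + 1 : ℕ) : ℝ) + μ + 1 = ((k : ℝ) + μ + 1) + 1 := by push_cast; ring
  rw [bc, bc, e1, e2, h1, h2, pow_succ]
  have hk1 : (0:ℝ) < (k : ℝ) + 1 := by positivity
  have hk2 : (0:ℝ) < (k : ℝ) + μ + 1 := by positivity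
  field_simp

lemma bc_succ_up {μ : ℝ} (hμ : 0 ≤ μ) (k : ℕ) :
    ((k : ℝ) + 1) * bc μ (k + 1) = -bc (μ + 1) k := by
  rw [bc_succ hμ, bc_up hμ]
  have hk1 : ((k:ℝ) + 1) ≠ 0 := by positivity
  have hk2 : ((k:ℝ) + μ + 1) ≠ 0 := by positivity
  field_simp

lemma bc_abs_succ {μ : ℝ} (hμ : 0 ≤ μ) (k : ℕ) :
    |bc μ (k + 1)| = |bc μ k| / (((k : ℝ) + 1) * ((k : ℝ) + μ + 1)) := by
  rw [bc_succ hμ, abs_div, abs_neg, abs_of_pos (by positivity : (0:ℝ) < ((k:ℝ)+1) * ((k:ℝ)+μ+1))]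

lemma summable_bg {μ : ℝ} (hμ : 0 ≤ μ) (x : ℝ) : Summable fun k : ℕ => bc μ k * x ^ k := by
  apply summable_of_ratio_norm_eventually_le (r := 1/2) (by norm_num)
  obtain ⟨N, hN⟩ := exists_nat_ge (2 * |x|)
  filter_upwards [eventually_ge_atTop N] with k hk
  have hk' : 2 * |x| ≤ (k : ℝ) + 1 := by
    calc 2 * |x| ≤ (N : ℝ) := hN
    _ ≤ (k : ℝ) := by exact_mod_cast hk
    _ ≤ (k : ℝ) + 1 := by linarith
  have h1 : (0:ℝ) < (k:ℝ) + 1 := by positivity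
  have h2 : (1:ℝ) ≤ (k:ℝ) + μ + 1 := by linarith [Nat.cast_nonneg (α := ℝ) k]
  have key : |x| / (((k : ℝ) + 1) * ((k : ℝ) + μ + 1)) ≤ 1/2 := by
    rw [div_le_iff₀ (by positivity)]
    nlinarith [abs_nonneg x]
  calc ‖bc μ (k+1) * x ^ (k+1)‖ = |bc μ k| * |x| ^ k * (|x| / (((k : ℝ) + 1) * ((k : ℝ) + μ + 1))) := by
        rw [norm_mul, Real.norm_eq_abs, Real.norm_eq_abs, bc_abs_succ hμ, abs_pow, pow_succ]
        ring
    _ ≤ |bc μ k| * |x| ^ k * (1/2) := by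
        apply mul_le_mul_of_nonneg_left key (by positivity)
    _ = 1/2 * ‖bc μ k * x ^ k‖ := by
        rw [norm_mul, Real.norm_eq_abs, Real.norm_eq_abs, abs_pow]; ring


lemma summable_u {μ : ℝ} (hμ : 0 ≤ μ) {M : ℝ} (hM : 1 ≤ M) :
    Summable fun k : ℕ => |bc μ k| * (((k : ℝ) + 1) * M ^ k) := by
  apply summable_of_ratio_norm_eventually_le (r := 1/2) (by norm_num)
  obtain ⟨N, hN⟩ := exists_nat_ge (4 * M)
  filter_upwards [eventually_ge_atTop N] with k hk
  have hk' : 4 * M ≤ (k : ℝ) + 1 := by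
    calc 4 * M ≤ (N : ℝ) := hN
    _ ≤ (k : ℝ) := by exact_mod_cast hk
    _ ≤ (k : ℝ) + 1 := by linarith
  have hk0 : (0:ℝ) ≤ (k : ℝ) := Nat.cast_nonneg k
  have h2 : (1:ℝ) ≤ (k:ℝ) + μ + 1 := by linarith
  have hb := abs_nonneg (bc μ k)
  have hMp : (0:ℝ) < M := by linarith
  have key : ((k:ℝ) + 2) * M ≤ (1/2) * (((k:ℝ) + 1) * (((k:ℝ) + 1) * ((k:ℝ) + μ + 1))) := by
    nlinarith [mul_nonneg (by linarith : (0:ℝ) ≤ (k:ℝ)+1-4*M) (by linarith : (0:ℝ) ≤ (k:ℝ)+2),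
      mul_nonneg hk0 (by linarith : (0:ℝ) ≤ (k:ℝ)+1),
      mul_nonneg (mul_nonneg (by linarith : (0:ℝ) ≤ (k:ℝ)+1) (by linarith : (0:ℝ) ≤ (k:ℝ)+1))
        (by linarith : (0:ℝ) ≤ (k:ℝ)+μ)]
  have p1 : (0:ℝ) ≤ |bc μ (k+1)| * (((((k+1:ℕ)):ℝ) + 1) * M ^ (k+1)) := by positivity
  have p2 : (0:ℝ) ≤ |bc μ k| * ((((k:ℕ):ℝ) + 1) * M ^ k) := by positivity
  show ‖|bc μ (k+1)| * (((((k+1:ℕ)):ℝ) + 1) * M ^ (k+1))‖ ≤ 1/2 * ‖|bc μ k| * ((((k:ℕ):ℝ) + 1) * M ^ k)‖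
  rw [Real.norm_of_nonneg p1, Real.norm_of_nonneg p2, bc_abs_succ hμ]
  push_cast
  rw [div_mul_eq_mul_div, div_mul_eq_mul_div, div_le_iff₀ (by positivity)]
  have hMk : (0:ℝ) < M ^ k := pow_pos hMp k
  have key2 := mul_le_mul_of_nonneg_left key (mul_nonneg hb hMk.le)
  rw [pow_succ]
  nlinarith [key2]

lemma summable_dbg {μ : ℝ} (hμ : 0 ≤ μ) {M : ℝ} (hM : 1 ≤ M) {x : ℝ} (hx : |x| ≤ M) :
    Summable fun k : ℕ => bc μ k * ((k : ℝ) * x ^ (k - 1)) := by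
  apply Summable.of_norm_bounded (summable_u hμ hM)
  intro k
  rw [norm_mul, norm_mul, Real.norm_eq_abs, Real.norm_eq_abs, Real.norm_eq_abs,
    Nat.abs_cast, abs_pow]
  have hM0 : (0:ℝ) < M := by linarith
  have h1 : |x| ^ (k - 1) ≤ M ^ k := by
    calc |x| ^ (k-1) ≤ M ^ (k-1) := pow_le_pow_left₀ (abs_nonneg x) hx _
    _ ≤ M ^ k := pow_le_pow_right₀ hM (Nat.sub_le k 1)
  have h2 : (k : ℝ) ≤ (k : ℝ) + 1 := by linarith
  calc |bc μ k| * ((k:ℝ) * |x| ^ (k-1)) ≤ |bc μ k| * (((k:ℝ)+1) * M ^ k) := by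
        apply mul_le_mul_of_nonneg_left _ (abs_nonneg _)
        exact mul_le_mul h2 h1 (by positivity) (by positivity)
    _ = |bc μ k| * (((k:ℝ)+1) * M ^ k) := rfl

lemma bg_hasDerivAt {μ : ℝ} (hμ : 0 ≤ μ) (x : ℝ) : HasDerivAt (bg μ) (-(bg (μ+1) x)) x := by
  set M : ℝ := |x| + 1 with hMdef
  have hM : 1 ≤ M := by rw [hMdef]; linarith [abs_nonneg x]
  have hball : x ∈ Metric.ball (0:ℝ) M := by
    simp [Real.dist_eq, hMdef]
  have key : HasDerivAt (fun z => ∑' k : ℕ, bc μ k * z ^ k)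
      (∑' k : ℕ, bc μ k * ((k : ℝ) * x ^ (k - 1))) x := by
    apply hasDerivAt_tsum_of_isPreconnected (summable_u hμ hM) Metric.isOpen_ball
      (convex_ball (0:ℝ) M).isPreconnected
      (fun k y _ => (hasDerivAt_pow k y).const_mul (bc μ k))
      (fun k y hy => ?_) (Metric.mem_ball_self (by linarith : (0:ℝ) < M)) (summable_bg hμ 0) hball
    have hyM : |y| ≤ M := by
      have := Metric.mem_ball.1 hy
      rw [Real.dist_eq, sub_zero] at this
      linarith
    rw [norm_mul, norm_mul, Real.norm_eq_abs, Real.norm_eq_abs, Real.norm_eq_abs,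
      Nat.abs_cast, abs_pow]
    have h1 : |y| ^ (k - 1) ≤ M ^ k :=
      le_trans (pow_le_pow_left₀ (abs_nonneg y) hyM _) (pow_le_pow_right₀ hM (Nat.sub_le k 1))
    exact mul_le_mul_of_nonneg_left
      (mul_le_mul (by linarith) h1 (by positivity) (by positivity)) (abs_nonneg _)
  have hsum : Summable fun k : ℕ => bc μ k * ((k : ℝ) * x ^ (k - 1)) :=
    summable_dbg hμ hM (by rw [hMdef]; linarith)
  have hshift : (∑' k : ℕ, bc μ k * ((k : ℝ) * x ^ (k - 1))) = -(bg (μ+1) x) := by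
    rw [hsum.tsum_eq_zero_add]
    simp only [Nat.cast_zero, zero_mul, mul_zero, zero_add, Nat.cast_add, Nat.cast_one,
      Nat.add_sub_cancel]
    have : ∀ k : ℕ, bc μ (k+1) * (((k:ℝ) + 1) * x ^ k) = -(bc (μ+1) k * x ^ k) := by
      intro k
      rw [show bc μ (k+1) * (((k:ℝ)+1) * x ^ k) = (((k:ℝ)+1) * bc μ (k+1)) * x ^ k from by ring,
        bc_succ_up hμ k]
      ring
    rw [tsum_congr this, tsum_neg]
    rfl
  rw [← hshift]
  exact key


lemma bg_zero {μ : ℝ} (hμ : 0 ≤ μ) : bg μ 0 = 1 / Real.Gamma (μ + 1) := by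
  rw [bg, tsum_eq_single 0 (by intro k hk; simp [zero_pow hk])]
  simp [bc, Real.Gamma_one]

lemma bg_zero_pos {μ : ℝ} (hμ : 0 ≤ μ) : 0 < bg μ 0 := by
  rw [bg_zero hμ]
  have : 0 < Real.Gamma (μ + 1) := Real.Gamma_pos_of_pos (by linarith)
  positivity

lemma bg_rec {μ : ℝ} (hμ : 0 ≤ μ) (x : ℝ) :
    bg μ x = (μ + 1) * bg (μ + 1) x - x * bg (μ + 2) x := by
  have s0 := summable_bg hμ x
  have s1 := summable_bg (by linarith : (0:ℝ) ≤ μ + 1) x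
  have s2 := summable_bg (by linarith : (0:ℝ) ≤ μ + 2) x
  have key : bg μ x - (μ + 1) * bg (μ + 1) x = -(x * bg (μ + 2) x) := by
    have e1 : (μ + 1) * bg (μ + 1) x = ∑' k : ℕ, (μ + 1) * (bc (μ+1) k * x ^ k) :=
      (tsum_mul_left).symm
    rw [bg, e1, ← Summable.tsum_sub s0 (s1.mul_left (μ+1))]
    have hsub : Summable fun k : ℕ => bc μ k * x ^ k - (μ+1) * (bc (μ+1) k * x ^ k) :=
      s0.sub (s1.mul_left (μ+1))
    rw [hsub.tsum_eq_zero_add]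
    have h0 : bc μ 0 * x ^ 0 - (μ+1) * (bc (μ+1) 0 * x ^ 0) = 0 := by
      rw [bc_up hμ 0]
      have : ((0:ℕ):ℝ) + μ + 1 = μ + 1 := by push_cast; ring
      rw [this]
      field_simp
      ring
    rw [h0, zero_add]
    have hterm : ∀ k : ℕ, bc μ (k+1) * x ^ (k+1) - (μ+1) * (bc (μ+1) (k+1) * x ^ (k+1))
        = -(x * (bc (μ+2) k * x ^ k)) := by
      intro k
      have hA : bc (μ+1) (k+1) = bc μ (k+1) / ((k:ℝ) + μ + 2) := by
        rw [bc_up hμ (k+1)]; push_cast; ring_nf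
      have hB : bc (μ+2) k = bc (μ+1) k / ((k:ℝ) + μ + 2) := by
        have h21 : μ + 2 = (μ + 1) + 1 := by ring
        rw [h21, bc_up (by linarith : (0:ℝ) ≤ μ + 1) k]
        ring_nf
      have hC : ((k:ℝ) + 1) * bc μ (k + 1) = -bc (μ + 1) k := bc_succ_up hμ k
      have hne : ((k:ℝ) + μ + 2) ≠ 0 := by positivity
      rw [hA, hB]
      field_simp
      linear_combination (x ^ (k+1)) * hC
    rw [tsum_congr hterm, tsum_neg, tsum_mul_left]
    rfl
  have := key
  linarith

lemma bg_continuous {μ : ℝ} (hμ : 0 ≤ μ) : Continuous (bg μ) :=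
  continuous_iff_continuousAt.2 fun x => (bg_hasDerivAt hμ x).continuousAt

/-- positivity propagates from index μ to μ+1 -/
lemma bg_next_pos {μ : ℝ} (hμ : 0 ≤ μ) {X : ℝ}
    (hpos : ∀ y, 0 ≤ y → y < X → 0 < bg μ y) :
    ∀ x, 0 < x → x < X → 0 < bg (μ + 1) x := by
  intro x hx hxX
  set ψ : ℝ → ℝ := fun y => y ^ (μ + 1) * bg (μ + 1) y with hψ
  have hdψ : ∀ y, 0 < y → HasDerivAt ψ
      (y ^ μ * ((μ + 1) * bg (μ + 1) y - y * bg (μ + 2) y)) y := by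
    intro y hy
    have h1 : HasDerivAt (fun y : ℝ => y ^ (μ + 1)) ((μ + 1) * y ^ μ) y := by
      have := Real.hasDerivAt_rpow_const (x := y) (p := μ + 1) (Or.inl hy.ne')
      simpa using this
    have h2 := bg_hasDerivAt (by linarith : (0:ℝ) ≤ μ + 1) y
    have : HasDerivAt ψ _ y := h1.mul h2
    convert this using 1
    have hyy : y ^ (μ + 1) = y ^ μ * y := by
      rw [Real.rpow_add hy, Real.rpow_one]
    rw [hyy]; ring
  have hcont : Continuous ψ := by
    apply Continuous.mul _ (bg_continuous (by linarith))
    exact Real.continuous_rpow_const (by linarith)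
  have hmono : StrictMonoOn ψ (Set.Icc 0 x) := by
    apply strictMonoOn_of_deriv_pos (convex_Icc 0 x) hcont.continuousOn
    intro y hy
    rw [interior_Icc] at hy
    rw [(hdψ y hy.1).deriv]
    have hr : 0 < bg μ y := hpos y hy.1.le (lt_trans hy.2 hxX)
    rw [← bg_rec hμ y]
    exact mul_pos (Real.rpow_pos_of_pos hy.1 μ) hr
  have h0 : ψ 0 = 0 := by
    simp [hψ, Real.zero_rpow (by linarith : μ + 1 ≠ 0)]
  have hlt : ψ 0 < ψ x := hmono (Set.left_mem_Icc.2 hx.le) (Set.right_mem_Icc.2 hx.le) hx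
  rw [h0] at hlt
  have hxp : 0 < x ^ (μ + 1) := Real.rpow_pos_of_pos hx _
  have hlt' : 0 < x ^ (μ + 1) * bg (μ + 1) x := hlt
  by_contra hneg
  push_neg at hneg
  nlinarith [hlt', mul_nonneg hxp.le (neg_nonneg.2 hneg)]

/-- `Jb μ t = (t/2)^μ * bg μ (t²/4)`. -/
noncomputable def Jb (μ t : ℝ) : ℝ := (t / 2) ^ μ * bg μ (t ^ 2 / 4)

lemma besselJ_eq_Jb (μ : ℝ) {t : ℝ} (ht : 0 < t) : besselJ μ t = Jb μ t := by
  have ht2 : 0 < t / 2 := by linarith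
  rw [besselJ, Jb, bg, ← tsum_mul_left]
  apply tsum_congr
  intro k
  have h1 : (t / 2 : ℝ) ^ (2 * (k : ℝ) + μ) = (t / 2) ^ μ * (t ^ 2 / 4) ^ k := by
    rw [Real.rpow_add ht2]
    have h2 : (t / 2 : ℝ) ^ (2 * (k : ℝ)) = (t ^ 2 / 4) ^ k := by
      have : (2 : ℝ) * (k : ℝ) = ((2 * k : ℕ) : ℝ) := by push_cast; ring
      rw [this, Real.rpow_natCast, pow_mul]
      norm_num
      ring_nf
    rw [h2]; ring
  rw [h1, bc]; ring

lemma Jb_hasDerivAt {μ : ℝ} (hμ : 0 ≤ μ) {t : ℝ} (ht : 0 < t) :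
    HasDerivAt (Jb μ) (μ / t * Jb μ t - Jb (μ + 1) t) t := by
  have ht2 : 0 < t / 2 := by linarith
  have h1 : HasDerivAt (fun s : ℝ => (s / 2) ^ μ) (μ * (t / 2) ^ (μ - 1) * (1 / 2)) t := by
    have hin : HasDerivAt (fun s : ℝ => s / 2) (1 / 2) t := by
      simpa using (hasDerivAt_id t).div_const 2
    have hout : HasDerivAt (fun y : ℝ => y ^ μ) (μ * (t / 2) ^ (μ - 1)) (t / 2) :=
      Real.hasDerivAt_rpow_const (Or.inl ht2.ne')
    exact hout.comp t hin
  have h2 : HasDerivAt (fun s : ℝ => bg μ (s ^ 2 / 4)) (-(bg (μ+1) (t^2/4)) * (2 * t ^ 1 / 4)) t := by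
    have hin : HasDerivAt (fun s : ℝ => s ^ 2 / 4) (2 * t ^ 1 / 4) t :=
      (hasDerivAt_pow 2 t).div_const 4
    exact (bg_hasDerivAt hμ (t ^ 2 / 4)).comp t hin
  have : HasDerivAt (Jb μ) _ t := h1.mul h2
  convert this using 1
  have e1 : (t / 2 : ℝ) ^ (μ - 1) = (t / 2) ^ μ / (t / 2) := by
    rw [Real.rpow_sub ht2, Real.rpow_one]
  have e2 : (t / 2 : ℝ) ^ (μ + 1) = (t / 2) ^ μ * (t / 2) := by
    rw [Real.rpow_add ht2, Real.rpow_one]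
  rw [Jb, Jb, e1, e2]
  field_simp
  ring

lemma Jb_rec {μ : ℝ} (hμ : 0 ≤ μ) {t : ℝ} (ht : 0 < t) :
    Jb (μ + 2) t = 2 * (μ + 1) / t * Jb (μ + 1) t - Jb μ t := by
  have ht2 : 0 < t / 2 := by linarith
  have e2 : (t / 2 : ℝ) ^ (μ + 1) = (t / 2) ^ μ * (t / 2) := by
    rw [Real.rpow_add ht2, Real.rpow_one]
  have e3 : (t / 2 : ℝ) ^ (μ + 2) = (t / 2) ^ μ * (t ^ 2 / 4) := by
    rw [Real.rpow_add ht2]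
    have : (t / 2 : ℝ) ^ (2:ℝ) = t ^ 2 / 4 := by
      rw [show ((2:ℝ)) = ((2:ℕ):ℝ) by norm_num, Real.rpow_natCast]
      ring
    rw [this]
  have hrec := bg_rec hμ (t ^ 2 / 4)
  rw [Jb, Jb, Jb, e2, e3]
  have hne : (t / 2 : ℝ) ^ μ ≠ 0 := (Real.rpow_pos_of_pos ht2 μ).ne'
  field_simp
  linear_combination 4 * hrec

lemma Jb_hasDerivAt' {μ : ℝ} (hμ : 0 ≤ μ) {t : ℝ} (ht : 0 < t) :
    HasDerivAt (Jb (μ + 1)) (Jb μ t - (μ + 1) / t * Jb (μ + 1) t) t := by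
  have h := Jb_hasDerivAt (by linarith : (0:ℝ) ≤ μ + 1) ht
  rw [show μ + 1 + 1 = μ + 2 by ring] at h
  have hrec := Jb_rec hμ ht
  convert h using 1
  rw [hrec]
  field_simp
  ring

lemma ratio_hasDerivAt {ν : ℝ} (hν : 0 ≤ ν) {t : ℝ} (ht : 0 < t) (hJ : Jb ν t ≠ 0) :
    HasDerivAt (fun τ => Jb (ν + 1) τ / Jb ν τ)
      (1 + (Jb (ν + 1) t / Jb ν t) ^ 2 - (2 * ν + 1) * (Jb (ν + 1) t / Jb ν t) / t) t := by
  have h : HasDerivAt (fun τ => Jb (ν + 1) τ / Jb ν τ) _ t := (Jb_hasDerivAt' hν ht).div (Jb_hasDerivAt hν ht) hJ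
  convert h using 1
  field_simp
  ring

lemma bg_pos_on {ν : ℝ} (hν : 0 ≤ ν) {x : ℝ} (hx0 : 0 ≤ x)
    (hnz : ∀ y, 0 < y → y ≤ x → bg ν y ≠ 0) : 0 < bg ν x := by
  rcases eq_or_lt_of_le hx0 with h | h
  · rw [← h]; exact bg_zero_pos hν
  by_contra hle
  push_neg at hle
  have hIcc : (0:ℝ) ∈ Icc (bg ν x) (bg ν 0) := ⟨hle, (bg_zero_pos hν).le⟩
  obtain ⟨y, hy, hy0⟩ := intermediate_value_Icc' h.le ((bg_continuous hν).continuousOn) hIcc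
  have hy' : 0 < y := by
    rcases eq_or_lt_of_le hy.1 with h' | h'
    · exfalso; rw [← h'] at hy0; exact (bg_zero_pos hν).ne' hy0
    · exact h'
  exact hnz y hy' hy.2 hy0

lemma mem_S_of_bg {ν : ℝ} {x : ℝ} (hx : 0 < x) (h : bg ν x = 0) :
    0 < 2 * Real.sqrt x ∧ besselJ ν (2 * Real.sqrt x) = 0 := by
  have hs : 0 < Real.sqrt x := Real.sqrt_pos.2 hx
  have ht : 0 < 2 * Real.sqrt x := by linarith
  refine ⟨ht, ?_⟩
  rw [besselJ_eq_Jb ν ht, Jb]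
  have hx4 : (2 * Real.sqrt x) ^ 2 / 4 = x := by
    rw [mul_pow, Real.sq_sqrt hx.le]; ring
  rw [hx4, h, mul_zero]

lemma S_nonempty (ν : ℝ) (hν : 0 ≤ ν) :
    {t : ℝ | 0 < t ∧ besselJ ν t = 0}.Nonempty := by
  by_contra hS
  rw [Set.not_nonempty_iff_eq_empty] at hS
  have hSempty : ∀ t : ℝ, ¬(0 < t ∧ besselJ ν t = 0) := by
    intro t ht
    have : t ∈ {t : ℝ | 0 < t ∧ besselJ ν t = 0} := ht
    rw [hS] at this
    exact this
  have hnz : ∀ y, 0 < y → bg ν y ≠ 0 := fun y hy h => hSempty _ (mem_S_of_bg hy h)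
  have hpos : ∀ x, 0 ≤ x → 0 < bg ν x := fun x hx =>
    bg_pos_on hν hx fun y hy _ => hnz y hy
  have hpos1 : ∀ x, 0 < x → 0 < bg (ν + 1) x := fun x hx =>
    bg_next_pos hν (X := x + 1) (fun y hy0 _ => hpos y hy0) x hx (lt_add_one x)
  have hJpos : ∀ t, 0 < t → 0 < Jb ν t := fun t ht =>
    mul_pos (Real.rpow_pos_of_pos (by linarith) _) (hpos _ (by positivity))
  have hJ1pos : ∀ t, 0 < t → 0 < Jb (ν + 1) t := fun t ht =>
    mul_pos (Real.rpow_pos_of_pos (by linarith) _) (hpos1 _ (by positivity))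
  set r : ℝ → ℝ := fun t => Jb (ν + 1) t / Jb ν t with hrdef
  have hr : ∀ t, 0 < t → 0 < r t := fun t ht => div_pos (hJ1pos t ht) (hJpos t ht)
  set T : ℝ := 2 * ν + 1 with hTdef
  have hT : 0 < T := by rw [hTdef]; linarith
  set h : ℝ → ℝ := fun t => Real.arctan (r t) - t / 2 with hhdef
  have hder : ∀ t, T ≤ t → HasDerivAt h
      ((1 / (1 + r t ^ 2)) * (1 + r t ^ 2 - (2 * ν + 1) * r t / t) - 1 / 2) t := by
    intro t htT
    have ht0 : 0 < t := lt_of_lt_of_le hT htT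
    have h1 := (Real.hasDerivAt_arctan (r t)).comp t
      (ratio_hasDerivAt hν ht0 (hJpos t ht0).ne')
    have h2 : HasDerivAt (fun t : ℝ => t / 2) (1 / 2) t := by
      simpa using (hasDerivAt_id t).div_const 2
    exact h1.sub h2
  have hnonneg : ∀ t, T ≤ t →
      0 ≤ (1 / (1 + r t ^ 2)) * (1 + r t ^ 2 - (2 * ν + 1) * r t / t) - 1 / 2 := by
    intro t htT
    have ht0 : 0 < t := lt_of_lt_of_le hT htT
    have hrt := hr t ht0
    have hden : (0:ℝ) < 1 + r t ^ 2 := by positivity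
    have h1 : (2 * ν + 1) * r t / t ≤ r t := by
      rw [div_le_iff₀ ht0]
      nlinarith [mul_nonneg hrt.le (sub_nonneg.2 htT)]
    have h2 : (1 + r t ^ 2) / 2 ≤ 1 + r t ^ 2 - (2 * ν + 1) * r t / t := by
      nlinarith [sq_nonneg (r t - 1)]
    have h3 := mul_le_mul_of_nonneg_left h2 (by positivity : (0:ℝ) ≤ 1 / (1 + r t ^ 2))
    have h4 : (1 / (1 + r t ^ 2)) * ((1 + r t ^ 2) / 2) = 1 / 2 := by
      field_simp
    linarith [h3, h4.symm.le]
  have hmono : MonotoneOn h (Ici T) := by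
    apply monotoneOn_of_deriv_nonneg (convex_Ici T)
    · exact fun t htT => (hder t htT).continuousAt.continuousWithinAt
    · intro t htT
      rw [interior_Ici] at htT
      exact (hder t (le_of_lt htT)).differentiableAt.differentiableWithinAt
    · intro t htT
      rw [interior_Ici] at htT
      rw [(hder t (le_of_lt htT)).deriv]
      exact hnonneg t (le_of_lt htT)
  have hpi := Real.pi_pos
  have hkey := hmono (self_mem_Ici) (by simp; linarith : T + 4 * π ∈ Ici T) (by linarith)
  have e1 : h T = Real.arctan (r T) - T / 2 := rfl
  have e2 : h (T + 4 * π) = Real.arctan (r (T + 4 * π)) - (T + 4 * π) / 2 := rfl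
  have b1 : Real.arctan (r (T + 4 * π)) < π / 2 := Real.arctan_lt_pi_div_two _
  have b2 : -(π / 2) < Real.arctan (r T) := Real.neg_pi_div_two_lt_arctan _
  rw [e1, e2] at hkey
  linarith

end BesselAux

open BesselAux

theorem stmt_13 (n : ℕ) (hn : 2 ≤ n) (R ν : ℝ) (hR : 0 < R)
    (hν : ν ∈ Set.Icc (0 : ℝ) (((n : ℝ) - 2) / 2))
    (C : ℝ) (hC : C = besselFirstZero ν ^ 2 / R ^ 2)
    (G : ℝ → ℝ)
    (hG : ∀ t, G t = ((n : ℝ) - 2 - 2 * ν) / (2 * t) +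
        Real.sqrt C * (besselJ (ν + 1) (Real.sqrt C * t) / besselJ ν (Real.sqrt C * t))) :
    ∀ t ∈ Set.Ioo (0 : ℝ) R,
      besselJ ν (Real.sqrt C * t) ≠ 0 ∧ 0 < G t ∧
      deriv G t + (((n : ℝ) - 1) / t) * G t - G t ^ 2 =
        ((((n : ℝ) - 2) ^ 2 / 4 - ν ^ 2)) / t ^ 2 + C := by
  obtain ⟨hν0, hν2⟩ := hν
  set S : Set ℝ := {t : ℝ | 0 < t ∧ besselJ ν t = 0} with hSdef
  have hSne : S.Nonempty := S_nonempty ν hν0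
  have hSbdd : BddBelow S := ⟨0, fun s hs => hs.1.le⟩
  set j : ℝ := besselFirstZero ν with hjdef
  have hjinf : j = sInf S := rfl
  -- members of S have bg ν vanishing
  have hmem_bg : ∀ s ∈ S, bg ν (s ^ 2 / 4) = 0 := by
    intro s hs
    have h1 : besselJ ν s = Jb ν s := besselJ_eq_Jb ν hs.1
    have h2 : Jb ν s = 0 := by rw [← h1]; exact hs.2
    rw [Jb] at h2
    have h3 : (0:ℝ) < (s / 2) ^ ν := Real.rpow_pos_of_pos (by linarith [hs.1]) ν
    rcases mul_eq_zero.1 h2 with h | h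
    · exact absurd h h3.ne'
    · exact h
  -- a positive lower bound on zeros
  obtain ⟨ε, hε, hεpos⟩ : ∃ ε > 0, ∀ x, 0 ≤ x → x ≤ ε → 0 < bg ν x := by
    have hc : ContinuousAt (bg ν) 0 := (bg_continuous hν0).continuousAt
    have h0 : 0 < bg ν 0 := bg_zero_pos hν0
    have hev : ∀ᶠ x in nhds (0:ℝ), 0 < bg ν x := hc.eventually (eventually_gt_nhds h0)
    obtain ⟨δ, hδ, hδ'⟩ := Metric.eventually_nhds_iff.1 hev
    refine ⟨δ / 2, by linarith, fun x hx0 hxδ => hδ' ?_⟩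
    rw [Real.dist_eq, sub_zero, abs_of_nonneg hx0]
    linarith
  have hjb : Real.sqrt (4 * ε) ≤ j := by
    rw [hjinf]
    apply le_csInf hSne
    intro s hs
    have hbg := hmem_bg s hs
    have hgt : ε < s ^ 2 / 4 := by
      by_contra hle
      push_neg at hle
      exact (hεpos _ (by positivity) hle).ne' hbg
    have : 4 * ε < s ^ 2 := by linarith
    calc Real.sqrt (4 * ε) ≤ Real.sqrt (s ^ 2) := Real.sqrt_le_sqrt this.le
      _ = s := Real.sqrt_sq hs.1.le
  have hj0 : 0 < j := lt_of_lt_of_le (Real.sqrt_pos.2 (by linarith)) hjb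
  -- no zeros of besselJ below j
  have hnozero : ∀ u, 0 < u → u < j → besselJ ν u ≠ 0 := by
    intro u hu huj hzero
    have : u ∈ S := ⟨hu, hzero⟩
    have := csInf_le hSbdd this
    rw [← hjinf] at this
    linarith
  -- bg ν positive on [0, j²/4)
  have hbgpos : ∀ x, 0 ≤ x → x < j ^ 2 / 4 → 0 < bg ν x := by
    intro x hx0 hxj
    apply bg_pos_on hν0 hx0
    intro y hy hyx hbg0
    obtain ⟨hty, hJy⟩ := mem_S_of_bg hy hbg0
    apply hnozero _ hty _ hJy
    have h1 : Real.sqrt y < Real.sqrt (j ^ 2 / 4) := by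
      apply Real.sqrt_lt_sqrt hy.le
      linarith
    have h2 : Real.sqrt (j ^ 2 / 4) = j / 2 := by
      rw [show j ^ 2 / 4 = (j / 2) ^ 2 by ring, Real.sqrt_sq (by linarith)]
    rw [h2] at h1
    linarith
  have hbg1pos : ∀ x, 0 < x → x < j ^ 2 / 4 → 0 < bg (ν + 1) x :=
    bg_next_pos hν0 hbgpos
  -- the scaling factor
  have hC0 : 0 ≤ C := by rw [hC]; positivity
  set s : ℝ := Real.sqrt C with hsdef
  have hs2 : s ^ 2 = C := Real.sq_sqrt hC0
  have hsval : s = j / R := by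
    rw [hsdef, hC, show j ^ 2 / R ^ 2 = (j / R) ^ 2 by ring]
    exact Real.sqrt_sq (by positivity)
  have hspos : 0 < s := by rw [hsval]; positivity
  -- now fix t
  intro t ht
  obtain ⟨ht0, htR⟩ := ht
  set u : ℝ := s * t with hudef
  have hu0 : 0 < u := mul_pos hspos ht0
  have huj : u < j := by
    rw [hudef, hsval]
    calc j / R * t < j / R * R := by
          apply mul_lt_mul_of_pos_left htR (by positivity)
      _ = j := by field_simp
  have hxlt : u ^ 2 / 4 < j ^ 2 / 4 := by nlinarith
  have hJA : 0 < Jb ν u :=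
    mul_pos (Real.rpow_pos_of_pos (by linarith) _) (hbgpos _ (by positivity) hxlt)
  have hJB : 0 < Jb (ν + 1) u :=
    mul_pos (Real.rpow_pos_of_pos (by linarith) _) (hbg1pos _ (by positivity) hxlt)
  have hJAne : besselJ ν u ≠ 0 := by
    rw [besselJ_eq_Jb ν hu0]; exact hJA.ne'
  refine ⟨hJAne, ?_, ?_⟩
  -- positivity of G
  · rw [hG t, besselJ_eq_Jb ν hu0, besselJ_eq_Jb (ν + 1) hu0]
    have h1 : 0 ≤ ((n : ℝ) - 2 - 2 * ν) / (2 * t) := by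
      apply div_nonneg _ (by linarith)
      have : 2 * ν ≤ (n : ℝ) - 2 := by linarith [hν2]
      linarith
    have h2 : 0 < s * (Jb (ν + 1) u / Jb ν u) := mul_pos hspos (div_pos hJB hJA)
    linarith
  -- the Riccati equation
  · set c : ℝ := (n : ℝ) - 2 - 2 * ν with hcdef
    set rr : ℝ := Jb (ν + 1) u / Jb ν u with hrrdef
    have hDG : HasDerivAt G
        ((0 * (2 * t) - c * 2) / (2 * t) ^ 2 +
          s * ((1 + rr ^ 2 - (2 * ν + 1) * rr / u) * (s * 1))) t := by
      have hF : HasDerivAt (fun τ => c / (2 * τ) +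
          s * (Jb (ν + 1) (s * τ) / Jb ν (s * τ)))
          ((0 * (2 * t) - c * 2) / (2 * t) ^ 2 +
            s * ((1 + rr ^ 2 - (2 * ν + 1) * rr / u) * (s * 1))) t := by
        have hpart1 : HasDerivAt (fun τ : ℝ => c / (2 * τ))
            ((0 * (2 * t) - c * 2) / (2 * t) ^ 2) t := by
          have h2t : HasDerivAt (fun τ : ℝ => 2 * τ) 2 t := by
            simpa using (hasDerivAt_id t).const_mul (2:ℝ)
          exact (hasDerivAt_const t c).div h2t (by positivity)
        have hinner : HasDerivAt (fun τ : ℝ => s * τ) (s * 1) t :=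
          (hasDerivAt_id t).const_mul s
        have houter := ratio_hasDerivAt hν0 hu0 hJA.ne'
        have hcomp := houter.comp t hinner
        exact hpart1.add (hcomp.const_mul s)
      apply hF.congr_of_eventuallyEq
      filter_upwards [Ioi_mem_nhds ht0] with τ hτ
      have hτ0 : (0:ℝ) < τ := hτ
      have hsτ : 0 < s * τ := mul_pos hspos hτ0
      rw [hG τ, besselJ_eq_Jb ν hsτ, besselJ_eq_Jb (ν + 1) hsτ]
    have hs0 : s ≠ 0 := hspos.ne'
    have ht0' : t ≠ 0 := ht0.ne'
    rw [hDG.deriv, hG t, besselJ_eq_Jb ν hu0, besselJ_eq_Jb (ν + 1) hu0, ← hs2, ← hrrdef,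
      hudef, hcdef]
    clear_value rr u s
    field_simp
    ring
end

section
/- Let n ≥ 3, κ < 0, x₀ a point, R > 0, and set a = 1/((n−1)√(−κ)·coth(√(−κ)R)). Define, for t > R, G(t) = −1/(2(t − R + a)) + ((n−1)/2)·√(−κ)·coth(√(−κ)t) and W(t) = (n−1)²|κ|/4 + 1/(4(t − R + a)²) + |κ|(n−1)(n−3)/(4 sinh²(√(−κ)t)). Then G is positive on (R,∞) and satisfies G'(t) + (n−1)·√(−κ)·coth(√(−κ)t)·G(t) − G(t)² = W(t) for all t > R. -/
lemma alg_riccati (m s u S C : ℝ) (hu : u ≠ 0) (hS : S ≠ 0) (hC : C ^ 2 = S ^ 2 + 1) :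
    2 / (2 * u) ^ 2 + m / 2 * s * (-s / S ^ 2)
      + m * s * (C / S) * (-(1 / (2 * u)) + m / 2 * s * (C / S))
      - (-(1 / (2 * u)) + m / 2 * s * (C / S)) ^ 2
    = m ^ 2 * s ^ 2 / 4 + 1 / (4 * u ^ 2) + s ^ 2 * m * (m - 2) / (4 * S ^ 2) := by
  field_simp
  linear_combination (4 * u ^ 2 * m ^ 2 * s ^ 2) * hC

theorem stmt_15 (n : ℕ) (hn : 3 ≤ n) (κ R : ℝ) (hκ : κ < 0) (hR : 0 < R)
    (a : ℝ)
    (ha : a = 1 / (((n : ℝ) - 1) * Real.sqrt (-κ) *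
        (Real.cosh (Real.sqrt (-κ) * R) / Real.sinh (Real.sqrt (-κ) * R))))
    (G W : ℝ → ℝ)
    (hG : ∀ t, G t = -(1 / (2 * (t - R + a))) + (((n : ℝ) - 1) / 2) * Real.sqrt (-κ) *
        (Real.cosh (Real.sqrt (-κ) * t) / Real.sinh (Real.sqrt (-κ) * t)))
    (hW : ∀ t, W t = ((n : ℝ) - 1) ^ 2 * |κ| / 4 + 1 / (4 * (t - R + a) ^ 2) +
        |κ| * ((n : ℝ) - 1) * ((n : ℝ) - 3) / (4 * Real.sinh (Real.sqrt (-κ) * t) ^ 2)) :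
    ∀ t : ℝ, R < t →
      0 < G t ∧
      deriv G t + ((n : ℝ) - 1) * Real.sqrt (-κ) *
          (Real.cosh (Real.sqrt (-κ) * t) / Real.sinh (Real.sqrt (-κ) * t)) * G t -
        G t ^ 2 = W t := by
  set s := Real.sqrt (-κ) with hs_def
  have hκ' : 0 < -κ := by linarith
  have hs : 0 < s := Real.sqrt_pos.2 hκ'
  have hs2 : s ^ 2 = -κ := Real.sq_sqrt hκ'.le
  have habs : |κ| = -κ := abs_of_neg hκ
  have hn1 : (2:ℝ) ≤ (n:ℝ) - 1 := by
    have h3 : (3:ℝ) ≤ (n:ℝ) := by exact_mod_cast hn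
    linarith
  have hn1pos : (0:ℝ) < (n:ℝ) - 1 := by linarith
  have hsinhR : 0 < Real.sinh (s * R) := Real.sinh_pos_iff.2 (by positivity)
  have hcoshR : 0 < Real.cosh (s * R) := Real.cosh_pos _
  have ha' : 0 < a := by
    rw [ha]
    exact one_div_pos.2 (mul_pos (mul_pos hn1pos hs) (div_pos hcoshR hsinhR))
  have haR : ((n:ℝ) - 1) * s * Real.cosh (s * R) * a = Real.sinh (s * R) := by
    rw [ha]
    field_simp
  -- derivative of the auxiliary function
  have hg_deriv : ∀ x : ℝ, HasDerivAt
      (fun y => ((n:ℝ) - 1) * s * Real.cosh (s * y) * (y - R + a) - Real.sinh (s * y))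
      (((n:ℝ) - 1) * s * (Real.sinh (s * x) * s) * (x - R + a)
        + ((n:ℝ) - 1) * s * Real.cosh (s * x) * 1 - Real.cosh (s * x) * s) x := by
    intro x
    have hsx : HasDerivAt (fun y : ℝ => s * y) s x := by
      simpa using (hasDerivAt_id x).const_mul s
    have hcosh : HasDerivAt (fun y : ℝ => Real.cosh (s * y)) (Real.sinh (s * x) * s) x :=
      (Real.hasDerivAt_cosh (s * x)).comp x hsx
    have hsinh : HasDerivAt (fun y : ℝ => Real.sinh (s * y)) (Real.cosh (s * x) * s) x :=
      (Real.hasDerivAt_sinh (s * x)).comp x hsx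
    have hlin : HasDerivAt (fun y : ℝ => y - R + a) 1 x := by
      simpa using ((hasDerivAt_id x).sub_const R).add_const a
    exact ((hcosh.const_mul (((n:ℝ) - 1) * s)).mul hlin).sub hsinh
  have key : ∀ x : ℝ, R < x →
      0 < ((n:ℝ) - 1) * s * Real.cosh (s * x) * (x - R + a) - Real.sinh (s * x) := by
    have hmono : StrictMonoOn
        (fun y => ((n:ℝ) - 1) * s * Real.cosh (s * y) * (y - R + a) - Real.sinh (s * y))
        (Set.Ici R) := by
      apply strictMonoOn_of_deriv_pos (convex_Ici R)
      · exact fun x _ => (hg_deriv x).continuousAt.continuousWithinAt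
      · intro x hx
        rw [interior_Ici] at hx
        rw [(hg_deriv x).deriv]
        have hx' : R < x := hx
        have hx0 : 0 < x := hR.trans hx'
        have hS : 0 < Real.sinh (s * x) := Real.sinh_pos_iff.2 (by positivity)
        have hC : 0 < Real.cosh (s * x) := Real.cosh_pos _
        have hxa : 0 < x - R + a := by linarith
        have h1 : 0 < ((n:ℝ) - 1) * s * (Real.sinh (s * x) * s) * (x - R + a) := by
          have := mul_pos (mul_pos (mul_pos hn1pos hs) (mul_pos hS hs)) hxa
          linarith [this]
        nlinarith [mul_pos hC hs]
    intro x hx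
    have h0 : ((n:ℝ) - 1) * s * Real.cosh (s * R) * (R - R + a) - Real.sinh (s * R) = 0 := by
      have : R - R + a = a := by ring
      rw [this, haR]; ring
    have := hmono Set.self_mem_Ici (le_of_lt hx : R ≤ x) hx
    simp only at this
    linarith
  intro t ht
  have ht0 : 0 < t := hR.trans ht
  have hS : 0 < Real.sinh (s * t) := Real.sinh_pos_iff.2 (by positivity)
  have hC : 0 < Real.cosh (s * t) := Real.cosh_pos _
  have hu : 0 < t - R + a := by linarith
  have hkt := key t ht
  constructor
  · have hGt : G t = (((n:ℝ) - 1) * s * Real.cosh (s * t) * (t - R + a) - Real.sinh (s * t)) /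
        (2 * (t - R + a) * Real.sinh (s * t)) := by
      rw [hG]
      field_simp
      ring
    rw [hGt]
    exact div_pos hkt (by positivity)
  · have hGfun : G = fun x => -(1 / (2 * (x - R + a))) + (((n:ℝ) - 1) / 2) * s *
        (Real.cosh (s * x) / Real.sinh (s * x)) := funext hG
    have h2ne : 2 * (t - R + a) ≠ 0 := by positivity
    have h1 : HasDerivAt (fun x : ℝ => 2 * (x - R + a)) 2 t := by
      simpa using (((hasDerivAt_id t).sub_const R).add_const a).const_mul 2
    have hA : HasDerivAt (fun x : ℝ => -(1 / (2 * (x - R + a))))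
        (2 / (2 * (t - R + a)) ^ 2) t := by
      have := (h1.inv h2ne).neg
      have e1 : (fun x : ℝ => -(1 / (2 * (x - R + a)))) = -(fun x : ℝ => 2 * (x - R + a))⁻¹ := by
        funext x; simp only [one_div, Pi.neg_apply, Pi.inv_apply]
      have e2 : (2 / (2 * (t - R + a)) ^ 2) = -(-2 / (2 * (t - R + a)) ^ 2) := by
        rw [neg_div, neg_neg]
      rw [e1, e2]; exact this
    have hsx : HasDerivAt (fun y : ℝ => s * y) s t := by
      simpa using (hasDerivAt_id t).const_mul s
    have hcosh : HasDerivAt (fun y : ℝ => Real.cosh (s * y)) (Real.sinh (s * t) * s) t :=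
      (Real.hasDerivAt_cosh (s * t)).comp t hsx
    have hsinh : HasDerivAt (fun y : ℝ => Real.sinh (s * y)) (Real.cosh (s * t) * s) t :=
      (Real.hasDerivAt_sinh (s * t)).comp t hsx
    have hB : HasDerivAt (fun x : ℝ => Real.cosh (s * x) / Real.sinh (s * x))
        ((Real.sinh (s * t) * s * Real.sinh (s * t) -
          Real.cosh (s * t) * (Real.cosh (s * t) * s)) / Real.sinh (s * t) ^ 2) t :=
      hcosh.div hsinh hS.ne'
    have hd : HasDerivAt G
        (2 / (2 * (t - R + a)) ^ 2 + (((n:ℝ) - 1) / 2) * s *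
          ((Real.sinh (s * t) * s * Real.sinh (s * t) -
            Real.cosh (s * t) * (Real.cosh (s * t) * s)) / Real.sinh (s * t) ^ 2)) t := by
      rw [hGfun]
      exact hA.add (hB.const_mul ((((n:ℝ) - 1) / 2) * s))
    have hcs : Real.cosh (s * t) ^ 2 = Real.sinh (s * t) ^ 2 + 1 := Real.cosh_sq (s * t)
    rw [hd.deriv, hG, hW, habs, ← hs2]
    have hnum : Real.sinh (s * t) * s * Real.sinh (s * t) -
        Real.cosh (s * t) * (Real.cosh (s * t) * s) = -s := by
      linear_combination (-s) * hcs
    rw [hnum]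
    linear_combination alg_riccati ((n:ℝ) - 1) s (t - R + a) (Real.sinh (s * t))
      (Real.cosh (s * t)) hu.ne' hS.ne' (by linarith [hcs])
end

section
/- Let n ≥ 2, p, α ∈ ℝ with n > p > 1 and −p+1 < α ≤ 1, set γ = 1 + α/(p−1), and u(x) = exp(−|x|^γ/p) on ℝⁿ. Then (∫_{ℝⁿ} |∇u|^p dx)^{1/p} · (∫_{ℝⁿ} |x|^{p'α} u^p dx)^{1/p'} = ((n+α−1)/p) · ∫_{ℝⁿ} |x|^{α−1} u^p dx, where p' = p/(p−1). -/
open MeasureTheory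

theorem stmt_16 (n : ℕ) (hn : 2 ≤ n) (p α : ℝ) (hp : 1 < p) (hpn : p < n)
    (hα1 : -p + 1 < α) (hα2 : α ≤ 1)
    (γ p' : ℝ) (hγ : γ = 1 + α / (p - 1)) (hp' : p' = p / (p - 1))
    (u : EuclideanSpace ℝ (Fin n) → ℝ)
    (hu : ∀ x, u x = Real.exp (-‖x‖ ^ γ / p)) :
    (∫ x : EuclideanSpace ℝ (Fin n), ‖gradient u x‖ ^ p) ^ (1 / p) *
      (∫ x : EuclideanSpace ℝ (Fin n), ‖x‖ ^ (p' * α) * u x ^ p) ^ (1 / p') =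
    (((n : ℝ) + α - 1) / p) * ∫ x : EuclideanSpace ℝ (Fin n), ‖x‖ ^ (α - 1) * u x ^ p := by
  haveI : NeZero n := ⟨by omega⟩
  have hp0 : (0 : ℝ) < p := by linarith
  have hp1 : (0 : ℝ) < p - 1 := by linarith
  have hγpos : 0 < γ := by
    rw [hγ]
    have : -1 < α / (p - 1) := by
      rw [lt_div_iff₀ hp1]; linarith
    linarith
  have hn2 : (2 : ℝ) ≤ (n : ℝ) := by exact_mod_cast hn
  have hp'pos : 0 < p' := by rw [hp']; positivity
  have hs2 : -(n : ℝ) < p' * α := by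
    have h1 : p' * (-p + 1) < p' * α := mul_lt_mul_of_pos_left hα1 hp'pos
    have h2 : p' * (-p + 1) = -p := by rw [hp']; field_simp; ring
    linarith
  have hs3 : -(n : ℝ) < α - 1 := by linarith
  -- u x ^ p = exp (-‖x‖ ^ γ)
  have hup : ∀ x : (EuclideanSpace ℝ (Fin n)), u x ^ p = Real.exp (-‖x‖ ^ γ) := by
    intro x
    rw [hu, Real.rpow_def_of_pos (Real.exp_pos _), Real.log_exp,
      div_mul_cancel₀ _ (ne_of_gt hp0)]
  -- polar coordinates key lemma
  set C : ℝ := (n : ℝ) * (volume (Metric.ball (0 : (EuclideanSpace ℝ (Fin n))) 1)).toReal with hC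
  have key : ∀ s : ℝ, -(n : ℝ) < s →
      ∫ x : (EuclideanSpace ℝ (Fin n)), ‖x‖ ^ s * Real.exp (-‖x‖ ^ γ) =
        C * ((1 / γ) * Real.Gamma ((s + n) / γ)) := by
    intro s hs
    have hpolar := integral_fun_norm_addHaar (volume : Measure (EuclideanSpace ℝ (Fin n)))
      (fun r : ℝ => r ^ s * Real.exp (-r ^ γ))
    have hdim : Module.finrank ℝ (EuclideanSpace ℝ (Fin n)) = n := finrank_euclideanSpace_fin
    rw [hdim] at hpolar
    rw [hpolar, nsmul_eq_mul, smul_eq_mul]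
    have hinner : ∫ y in Set.Ioi (0 : ℝ), y ^ (n - 1) • (y ^ s * Real.exp (-y ^ γ)) =
        ∫ y in Set.Ioi (0 : ℝ), y ^ ((n : ℝ) - 1 + s) * Real.exp (-y ^ γ) := by
      refine setIntegral_congr_fun measurableSet_Ioi fun y hy => ?_
      have hy0 : (0 : ℝ) < y := hy
      rw [smul_eq_mul, ← Real.rpow_natCast y (n - 1), Nat.cast_sub (by omega), Nat.cast_one,
        ← mul_assoc, ← Real.rpow_add hy0]
    rw [hinner, integral_rpow_mul_exp_neg_rpow hγpos (by linarith)]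
    have harg : ((n : ℝ) - 1 + s + 1) / γ = (s + n) / γ := by ring_nf
    rw [harg, hC]; unfold Measure.real; ring
  -- gradient norm formula away from 0
  have hgrad : ∀ x : (EuclideanSpace ℝ (Fin n)), x ≠ 0 →
      ‖gradient u x‖ = γ / p * (‖x‖ ^ (γ - 1) * Real.exp (-‖x‖ ^ γ / p)) := by
    intro x hx
    have hx0 : (0 : ℝ) < ‖x‖ := norm_pos_iff.2 hx
    have h1 : HasDerivAt (fun r : ℝ => r ^ γ) (γ * ‖x‖ ^ (γ - 1)) ‖x‖ :=
      Real.hasDerivAt_rpow_const (Or.inl hx0.ne')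
    have hg : HasDerivAt (fun r : ℝ => Real.exp (-r ^ γ / p))
        (Real.exp (-‖x‖ ^ γ / p) * (-(γ * ‖x‖ ^ (γ - 1)) / p)) ‖x‖ := by
      simpa [neg_div] using ((h1.neg).div_const p).exp
    have hN : DifferentiableAt ℝ (fun y : (EuclideanSpace ℝ (Fin n)) => ‖y‖) x :=
      ((contDiffAt_norm ℝ (n := 1) hx).differentiableAt one_ne_zero)
    have hcomp : HasFDerivAt u
        ((Real.exp (-‖x‖ ^ γ / p) * (-(γ * ‖x‖ ^ (γ - 1)) / p)) •
          fderiv ℝ (fun y : (EuclideanSpace ℝ (Fin n)) => ‖y‖) x) x := by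
      have h := hg.comp_hasFDerivAt x hN.hasFDerivAt
      have hfun : (fun r : ℝ => Real.exp (-r ^ γ / p)) ∘ (fun y : (EuclideanSpace ℝ (Fin n)) => ‖y‖) = u := by
        funext y; simp [hu, Function.comp]
      rwa [hfun] at h
    have hnorm1 : ‖fderiv ℝ (fun y : (EuclideanSpace ℝ (Fin n)) => ‖y‖) x‖ = 1 := norm_fderiv_norm hN
    have hgradnorm : ‖gradient u x‖ = ‖fderiv ℝ u x‖ :=
      (InnerProductSpace.toDual ℝ (EuclideanSpace ℝ (Fin n))).symm.norm_map _
    rw [hgradnorm, hcomp.fderiv, norm_smul, hnorm1, mul_one, Real.norm_eq_abs, abs_mul,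
      abs_of_pos (Real.exp_pos _), abs_div, abs_neg,
      abs_of_pos (by positivity : 0 < γ * ‖x‖ ^ (γ - 1)), abs_of_pos hp0]
    ring
  -- the gradient integrand a.e.
  have hγ1p : (γ - 1) * p = p' * α := by rw [hγ, hp']; field_simp; ring
  have hae : ∀ᵐ x : (EuclideanSpace ℝ (Fin n)), ‖gradient u x‖ ^ p =
      (γ / p) ^ p * (‖x‖ ^ (p' * α) * Real.exp (-‖x‖ ^ γ)) := by
    have h0 : ∀ᵐ x : (EuclideanSpace ℝ (Fin n)), x ≠ 0 := by
      rw [ae_iff]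
      simpa using measure_singleton (0 : (EuclideanSpace ℝ (Fin n)))
    filter_upwards [h0] with x hx
    have hxn : (0 : ℝ) ≤ ‖x‖ := norm_nonneg x
    rw [hgrad x hx,
      Real.mul_rpow (by positivity) (by positivity),
      Real.mul_rpow (Real.rpow_nonneg hxn _) (Real.exp_pos _).le,
      ← Real.rpow_mul hxn, hγ1p,
      Real.rpow_def_of_pos (Real.exp_pos _), Real.log_exp,
      div_mul_cancel₀ _ (ne_of_gt hp0)]
  -- evaluate the three integrals
  have htpos : 0 < (α - 1 + n) / γ := div_pos (by linarith) hγpos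
  have harg : (p' * α + n) / γ = (α - 1 + n) / γ + 1 := by
    have hnum : p' * α + n = (α - 1 + n) + γ := by rw [hp', hγ]; field_simp; ring
    rw [hnum, add_div, div_self (ne_of_gt hγpos)]
  have hGamma : Real.Gamma ((p' * α + n) / γ) =
      (α - 1 + n) / γ * Real.Gamma ((α - 1 + n) / γ) := by
    rw [harg, Real.Gamma_add_one (ne_of_gt htpos)]
  have hΓpos : 0 < Real.Gamma ((α - 1 + n) / γ) := Real.Gamma_pos_of_pos htpos
  have hCpos : 0 < C := by
    refine mul_pos (by positivity) (ENNReal.toReal_pos ?_ ?_)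
    · exact (Metric.measure_ball_pos volume 0 one_pos).ne'
    · exact measure_ball_lt_top.ne
  have e2 : ∫ x : (EuclideanSpace ℝ (Fin n)), ‖x‖ ^ (p' * α) * u x ^ p =
      C * ((1 / γ) * ((α - 1 + n) / γ * Real.Gamma ((α - 1 + n) / γ))) := by
    simp_rw [hup]
    rw [key _ hs2, hGamma]
  have e3 : ∫ x : (EuclideanSpace ℝ (Fin n)), ‖x‖ ^ (α - 1) * u x ^ p =
      C * ((1 / γ) * Real.Gamma ((α - 1 + n) / γ)) := by
    simp_rw [hup]
    rw [key _ hs3]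
  have e1 : ∫ x : (EuclideanSpace ℝ (Fin n)), ‖gradient u x‖ ^ p =
      (γ / p) ^ p *
        (C * ((1 / γ) * ((α - 1 + n) / γ * Real.Gamma ((α - 1 + n) / γ)))) := by
    rw [integral_congr_ae hae, integral_const_mul]
    simp_rw [hup] at e2
    rw [e2]
  rw [e1, e2, e3]
  have hApos : 0 < C * ((1 / γ) * ((α - 1 + n) / γ * Real.Gamma ((α - 1 + n) / γ))) := by
    positivity
  have hsum : 1 / p + 1 / p' = 1 := by
    rw [hp', one_div_div]
    field_simp
    ring
  rw [Real.mul_rpow (by positivity) hApos.le,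
    ← Real.rpow_mul (by positivity : (0 : ℝ) ≤ γ / p), mul_one_div_cancel (ne_of_gt hp0),
    Real.rpow_one, mul_assoc, ← Real.rpow_add hApos, hsum, Real.rpow_one]
  field_simp
  ring
end
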